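/- arXiv:1902.04327 — 2 statements merged into one kernel-verified Lean document; each statement's English description precedes it below -/
import Mathlib

section
/- Let N = 2n+1 with n ≥ 1, and let t_j = 2π(j−1)/N. Let A_{0,0} and A_{0,k}, B_{0,k}, A_{1,k}, B_{1,k}, A_{2,k}, B_{2,k} (k = 1,…,n) be arbitrary real numbers. Define T(t) = A_{0,0}/2 + Σ_{k=1}^{n} [ a_k cos(kt) + a_{N−k} cos((N−k)t) + a_{N+k} cos((N+k)t) + b_k sin(kt) + b_{N−k} sin((N−k)t) + b_{N+k} sin((N+k)t) ] with a_k = [A_{0,k}(N²−k²) − 2kB_{1,k} + A_{2,k}]/N², b_k = [B_{0,k}(N²−k²) + 2kA_{1,k} + B_{2,k}]/N², a_{N−k} = [A_{0,k}(kN+k²) + B_{1,k}(N+2k) − A_{2,k}]/(2N²), b_{N−k} = [−B_{0,k}(kN+k²) + A_{1,k}(N+2k) + B_{2,k}]/(2N²), a_{N+k} = [A_{0,k}(k²−kN) + B_{1,k}(2k−N) − A_{2,k}]/(2N²), b_{N+k} = [B_{0,k}(k²−kN) + A_{1,k}(N−2k) − B_{2,k}]/(2N²). Then for every integer j: T(t_j)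 = A_{0,0}/2 + Σ_{k=1}^{n} [A_{0,k} cos(k t_j) + B_{0,k} sin(k t_j)], T′(t_j) = Σ_{k=1}^{n} [A_{1,k} cos(k t_j) + B_{1,k} sin(k t_j)], and T″(t_j) = Σ_{k=1}^{n} [A_{2,k} cos(k t_j) + B_{2,k} sin(k t_j)]. -/
open Real Finset

/-!
At a node `t` of the grid, `N t ∈ 2πℤ`, so the harmonics of frequencies `N ± k` alias to
frequency `k`: `cos ((N ± k) t) = cos (k t)` and `sin ((N ± k) t) = ± sin (k t)`. Differentiation
multiplies the coefficients of frequency `ω` by `ω` (swapping `cos` and `sin`), so on the grid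
`T`, `T'`, `T''` are trigonometric polynomials of degree `n` whose `k`-th coefficients are linear in
`a_k, a_{N-k}, a_{N+k}, b_k, b_{N-k}, b_{N+k}`. Matching them with `A_{i,k}, B_{i,k}` gives one
`3 × 3` system for the `a`'s (from `A₀, B₁, A₂`) and one for the `b`'s (from `B₀, A₁, B₂`), and
formula (8) is their solution.
-/

noncomputable def sinusoid (c d ω t : ℝ) : ℝ := c * cos (ω * t) + d * sin (ω * t)

theorem hasDerivAt_sinusoid (c d ω t : ℝ) :
    HasDerivAt (sinusoid c d ω) (sinusoid (ω * d) (-(ω * c)) ω t) t := by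
  have hω : HasDerivAt (ω * ·) ω t := by simpa using (hasDerivAt_id t).const_mul ω
  refine ((((hasDerivAt_cos (ω * t)).comp t hω).const_mul c).add
    (((hasDerivAt_sin (ω * t)).comp t hω).const_mul d)).congr_deriv ?_
  simp only [sinusoid]
  ring

theorem sinusoid_add_sinusoid (c d c' d' ω t : ℝ) :
    sinusoid c d ω t + sinusoid c' d' ω t = sinusoid (c + c') (d + d') ω t := by
  simp only [sinusoid]
  ring

section Aliasing

variable {Ω t : ℝ} {m : ℤ}

theorem sinusoid_add_freq_of_mul_eq (h : Ω * t = m * (2 * π)) (c d ω : ℝ) :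
    sinusoid c d (Ω + ω) t = sinusoid c d ω t := by
  have h' : (Ω + ω) * t = ω * t + m * (2 * π) := by rw [add_mul, h, add_comm]
  simp only [sinusoid, h', cos_add_int_mul_two_pi, sin_add_int_mul_two_pi]

theorem sinusoid_sub_freq_of_mul_eq (h : Ω * t = m * (2 * π)) (c d ω : ℝ) :
    sinusoid c d (Ω - ω) t = sinusoid c (-d) ω t := by
  have h' : (Ω - ω) * t = m * (2 * π) - ω * t := by rw [sub_mul, h]
  simp only [sinusoid, h', cos_int_mul_two_pi_sub, sin_int_mul_two_pi_sub]
  ring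

end Aliasing

/-- The `k`-th summand of the polynomial `T` of formula (8). -/
noncomputable def hermiteSummand (N : ℕ) (a b : ℕ → ℝ) (k : ℕ) (t : ℝ) : ℝ :=
  sinusoid (a k) (b k) k t + sinusoid (a (N - k)) (b (N - k)) ((N : ℝ) - k) t +
    sinusoid (a (N + k)) (b (N + k)) ((N : ℝ) + k) t

section HermiteSummand

variable {N : ℕ} {a b : ℕ → ℝ}

theorem hasDerivAt_hermiteSummand {k : ℕ} (hk : k ≤ N) (t : ℝ) :
    HasDerivAt (hermiteSummand N a b k)
      (hermiteSummand N (fun i => i * b i) (fun i => -(i * a i)) k t) t := by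
  refine (((hasDerivAt_sinusoid (a k) (b k) k t).add
    (hasDerivAt_sinusoid (a (N - k)) (b (N - k)) ((N : ℝ) - k) t)).add
    (hasDerivAt_sinusoid (a (N + k)) (b (N + k)) ((N : ℝ) + k) t)).congr_deriv ?_
  simp only [hermiteSummand, Nat.cast_add, Nat.cast_sub hk]

theorem deriv_sum_hermiteSummand {s : Finset ℕ} (hs : ∀ k ∈ s, k ≤ N) :
    deriv (fun t => ∑ k ∈ s, hermiteSummand N a b k t) =
      fun t => ∑ k ∈ s, hermiteSummand N (fun i => i * b i) (fun i => -(i * a i)) k t :=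
  funext fun t => (HasDerivAt.fun_sum fun k hk => hasDerivAt_hermiteSummand (hs k hk) t).deriv

theorem hermiteSummand_of_mul_eq {t : ℝ} {m : ℤ} (h : (N : ℝ) * t = m * (2 * π)) (k : ℕ) :
    hermiteSummand N a b k t =
      sinusoid (a k + a (N - k) + a (N + k)) (b k - b (N - k) + b (N + k)) k t := by
  rw [hermiteSummand, sinusoid_sub_freq_of_mul_eq h, sinusoid_add_freq_of_mul_eq h,
    sinusoid_add_sinusoid, sinusoid_add_sinusoid, sub_eq_add_neg]

end HermiteSummand

theorem hermite_formula8_grid0_general (n : ℕ) (N : ℕ) (hN : N = 2 * n + 1)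
    (A₀ B₀ A₁ B₁ A₂ B₂ : ℕ → ℝ) (a b : ℕ → ℝ)
    (ha : ∀ k ∈ Icc 1 n,
      a k = (A₀ k * ((N : ℝ) ^ 2 - (k : ℝ) ^ 2) - 2 * k * B₁ k + A₂ k) / (N : ℝ) ^ 2 ∧
      b k = (B₀ k * ((N : ℝ) ^ 2 - (k : ℝ) ^ 2) + 2 * k * A₁ k + B₂ k) / (N : ℝ) ^ 2 ∧
      a (N - k) = (A₀ k * ((k : ℝ) * N + (k : ℝ) ^ 2) + B₁ k * ((N : ℝ) + 2 * k) - A₂ k) /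
        (2 * (N : ℝ) ^ 2) ∧
      b (N - k) = (-B₀ k * ((k : ℝ) * N + (k : ℝ) ^ 2) + A₁ k * ((N : ℝ) + 2 * k) + B₂ k) /
        (2 * (N : ℝ) ^ 2) ∧
      a (N + k) = (A₀ k * ((k : ℝ) ^ 2 - (k : ℝ) * N) + B₁ k * (2 * k - (N : ℝ)) - A₂ k) /
        (2 * (N : ℝ) ^ 2) ∧
      b (N + k) = (B₀ k * ((k : ℝ) ^ 2 - (k : ℝ) * N) + A₁ k * ((N : ℝ) - 2 * k) - B₂ k) /
        (2 * (N : ℝ) ^ 2))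
    (T : ℝ → ℝ)
    (hT : ∀ t : ℝ, T t = A₀ 0 / 2 + ∑ k ∈ Icc 1 n,
      (a k * cos ((k : ℝ) * t) + a (N - k) * cos (((N : ℝ) - k) * t) +
       a (N + k) * cos (((N : ℝ) + k) * t) +
       b k * sin ((k : ℝ) * t) + b (N - k) * sin (((N : ℝ) - k) * t) +
       b (N + k) * sin (((N : ℝ) + k) * t)))
    (j : ℤ) :
    T (2 * π * ((j : ℝ) - 1) / N) = A₀ 0 / 2 + ∑ k ∈ Icc 1 n,
      (A₀ k * cos ((k : ℝ) * (2 * π * ((j : ℝ) - 1) / N)) +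
       B₀ k * sin ((k : ℝ) * (2 * π * ((j : ℝ) - 1) / N))) ∧
    deriv T (2 * π * ((j : ℝ) - 1) / N) = ∑ k ∈ Icc 1 n,
      (A₁ k * cos ((k : ℝ) * (2 * π * ((j : ℝ) - 1) / N)) +
       B₁ k * sin ((k : ℝ) * (2 * π * ((j : ℝ) - 1) / N))) ∧
    deriv (deriv T) (2 * π * ((j : ℝ) - 1) / N) = ∑ k ∈ Icc 1 n,
      (A₂ k * cos ((k : ℝ) * (2 * π * ((j : ℝ) - 1) / N)) +
       B₂ k * sin ((k : ℝ) * (2 * π * ((j : ℝ) - 1) / N))) := by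
  have hN0 : (N : ℝ) ≠ 0 := by rw [hN]; positivity
  have hkN : ∀ k ∈ Icc 1 n, k ≤ N := fun k hk => by rw [mem_Icc] at hk; omega
  have hT' : T = fun t => A₀ 0 / 2 + ∑ k ∈ Icc 1 n, hermiteSummand N a b k t := by
    funext t
    rw [hT]
    exact congrArg _ (sum_congr rfl fun k _ => by simp only [hermiteSummand, sinusoid]; ring)
  have hnode : (N : ℝ) * (2 * π * ((j : ℝ) - 1) / N) = ((j - 1 : ℤ) : ℝ) * (2 * π) := by
    push_cast
    field_simp
  subst hT'
  rw [deriv_const_add', deriv_sum_hermiteSummand hkN, deriv_sum_hermiteSummand hkN]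
  simp only [hermiteSummand_of_mul_eq hnode]
  refine ⟨congrArg _ (sum_congr rfl fun k hk => ?_), sum_congr rfl fun k hk => ?_,
    sum_congr rfl fun k hk => ?_⟩ <;>
  · obtain ⟨e₁, e₂, e₃, e₄, e₅, e₆⟩ := ha k hk
    simp only [sinusoid, Nat.cast_add, Nat.cast_sub (hkN k hk), e₁, e₂, e₃, e₄, e₅, e₆]
    congr 2 <;> field_simp <;> ring

/-- Formula (8) with `I = 0`: the Hermite trigonometric polynomial `T` built
from the coefficients `A₀ₖ, B₀ₖ`, `A₁ₖ, B₁ₖ`, `A₂ₖ, B₂ₖ` matches, at the nodes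
`t_j = 2π(j-1)/N` of the grid `Δ_N^{(0)}`, the values of the trigonometric
polynomials interpolating `f`, `f'` and `f''`. -/
theorem hermite_formula8_grid0 (n : ℕ) (hn : 1 ≤ n) (N : ℕ) (hN : N = 2 * n + 1)
    (A₀ B₀ A₁ B₁ A₂ B₂ : ℕ → ℝ) (a b : ℕ → ℝ)
    (ha : ∀ k ∈ Icc 1 n,
      a k = (A₀ k * ((N : ℝ) ^ 2 - (k : ℝ) ^ 2) - 2 * k * B₁ k + A₂ k) / (N : ℝ) ^ 2 ∧
      b k = (B₀ k * ((N : ℝ) ^ 2 - (k : ℝ) ^ 2) + 2 * k * A₁ k + B₂ k) / (N : ℝ) ^ 2 ∧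
      a (N - k) = (A₀ k * ((k : ℝ) * N + (k : ℝ) ^ 2) + B₁ k * ((N : ℝ) + 2 * k) - A₂ k) /
        (2 * (N : ℝ) ^ 2) ∧
      b (N - k) = (-B₀ k * ((k : ℝ) * N + (k : ℝ) ^ 2) + A₁ k * ((N : ℝ) + 2 * k) + B₂ k) /
        (2 * (N : ℝ) ^ 2) ∧
      a (N + k) = (A₀ k * ((k : ℝ) ^ 2 - (k : ℝ) * N) + B₁ k * (2 * k - (N : ℝ)) - A₂ k) /
        (2 * (N : ℝ) ^ 2) ∧
      b (N + k) = (B₀ k * ((k : ℝ) ^ 2 - (k : ℝ) * N) + A₁ k * ((N : ℝ) - 2 * k) - B₂ k) /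
        (2 * (N : ℝ) ^ 2))
    (T : ℝ → ℝ)
    (hT : ∀ t : ℝ, T t = A₀ 0 / 2 + ∑ k ∈ Icc 1 n,
      (a k * cos ((k : ℝ) * t) + a (N - k) * cos (((N : ℝ) - k) * t) +
       a (N + k) * cos (((N : ℝ) + k) * t) +
       b k * sin ((k : ℝ) * t) + b (N - k) * sin (((N : ℝ) - k) * t) +
       b (N + k) * sin (((N : ℝ) + k) * t)))
    (j : ℤ) :
    T (2 * π * ((j : ℝ) - 1) / N) = A₀ 0 / 2 + ∑ k ∈ Icc 1 n,
      (A₀ k * cos ((k : ℝ) * (2 * π * ((j : ℝ) - 1) / N)) +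
       B₀ k * sin ((k : ℝ) * (2 * π * ((j : ℝ) - 1) / N))) ∧
    deriv T (2 * π * ((j : ℝ) - 1) / N) = ∑ k ∈ Icc 1 n,
      (A₁ k * cos ((k : ℝ) * (2 * π * ((j : ℝ) - 1) / N)) +
       B₁ k * sin ((k : ℝ) * (2 * π * ((j : ℝ) - 1) / N))) ∧
    deriv (deriv T) (2 * π * ((j : ℝ) - 1) / N) = ∑ k ∈ Icc 1 n,
      (A₂ k * cos ((k : ℝ) * (2 * π * ((j : ℝ) - 1) / N)) +
       B₂ k * sin ((k : ℝ) * (2 * π * ((j : ℝ) - 1) / N))) :=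
  hermite_formula8_grid0_general n N hN A₀ B₀ A₁ B₁ A₂ B₂ a b ha T hT j
end

section
/- Let N = 2n+1 with n ≥ 1, let t_j = π(2j−1)/N for j = 1,…,N, and let f_1,…,f_N and g_1,…,g_N be real numbers with Σ_{j=1}^{N} g_j = 0. Define A_{0,k} = (2/N) Σ_{j} f_j cos(k t_j), B_{0,k} = (2/N) Σ_{j} f_j sin(k t_j), A_{1,k} = (2/N) Σ_{j} g_j cos(k t_j), B_{1,k} = (2/N) Σ_{j} g_j sin(k t_j), and set T(t) = A_{0,0}/2 + (1/N) Σ_{k=1}^{n} { [(N−k)A_{0,k} − B_{1,k}] cos(kt) − [kA_{0,k} + B_{1,k}] cos((N−k)t) + [(N−k)B_{0,k} + A_{1,k}] sin(kt) + [kB_{0,k} − A_{1,k}] sin((N−k)t) }. Then for every j = 1,…,N: T(t_j) = f_j and T′(t_j) = g_j. -/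
/-!
At a node `t_j` one has `N t_j ≡ π (mod 2π)`, so the frequency `N - k` folds back onto `k`:
`cos ((N - k) t_j) = - cos (k t_j)` and `sin ((N - k) t_j) = sin (k t_j)`. Hence `T (t_j)` and
`T' (t_j)` collapse to the classical trigonometric interpolants of `f` and of `g` (the latter
without constant term, since `∑ g = 0`), and these reproduce the data by the discrete
orthogonality `∑_{k=1}^n cos (k (t_i - t_j)) = n` or `-1/2` according as `i = j` or not.
-/

open Real Finset

noncomputable def gridNode (N j : ℕ) : ℝ := π * (2 * j - 1) / N

section GridNode

variable {N : ℕ}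

lemma natCast_mul_gridNode (hN : N ≠ 0) (j : ℕ) :
    (N : ℝ) * gridNode N j = π + ((j : ℤ) - 1 : ℤ) * (2 * π) := by
  unfold gridNode
  push_cast
  field_simp
  ring

lemma cos_natCast_sub_mul_gridNode (hN : N ≠ 0) (j : ℕ) (x : ℝ) :
    cos ((N - x) * gridNode N j) = -cos (x * gridNode N j) := by
  rw [sub_mul, natCast_mul_gridNode hN, add_sub_right_comm, cos_add_int_mul_two_pi, cos_pi_sub]

lemma sin_natCast_sub_mul_gridNode (hN : N ≠ 0) (j : ℕ) (x : ℝ) :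
    sin ((N - x) * gridNode N j) = sin (x * gridNode N j) := by
  rw [sub_mul, natCast_mul_gridNode hN, add_sub_right_comm, sin_add_int_mul_two_pi, sin_pi_sub]

lemma gridNode_sub_gridNode (i j : ℕ) :
    gridNode N i - gridNode N j = 2 * π * ((i : ℤ) - j : ℤ) / N := by
  unfold gridNode
  push_cast
  ring

end GridNode

lemma two_mul_sin_half_mul_sum_cos (θ : ℝ) (n : ℕ) :
    2 * sin (θ / 2) * ∑ k ∈ Icc 1 n, cos (k * θ)
      = sin ((2 * n + 1) * (θ / 2)) - sin (θ / 2) := by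
  induction n with
  | zero => simp
  | succ m ih =>
    rw [sum_Icc_succ_top (by omega), mul_add, ih]
    push_cast
    rw [show (2 * (m : ℝ) + 1) * (θ / 2) = (m + 1) * θ - θ / 2 by ring,
      show (2 * ((m : ℝ) + 1) + 1) * (θ / 2) = (m + 1) * θ + θ / 2 by ring]
    linear_combination sin_sub ((m + 1) * θ) (θ / 2) - sin_add ((m + 1) * θ) (θ / 2)

lemma sum_cos_two_pi_int_mul_div_of_not_dvd (n : ℕ) {m : ℤ} (hm : ¬ (2 * n + 1 : ℤ) ∣ m) :
    ∑ k ∈ Icc 1 n, cos (k * (2 * π * m / (2 * n + 1))) = -1 / 2 := by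
  have hsin : sin (π * m / (2 * n + 1)) ≠ 0 := by
    rw [Ne, sin_eq_zero_iff]
    rintro ⟨q, hq⟩
    refine hm ⟨q, ?_⟩
    have hmq : (m : ℝ) = (2 * n + 1) * q := by
      field_simp at hq
      linear_combination -hq
    exact_mod_cast hmq
  have htel := two_mul_sin_half_mul_sum_cos (2 * π * m / (2 * n + 1)) n
  rw [show 2 * π * m / (2 * n + 1) / 2 = π * m / (2 * n + 1) by ring,
    show (2 * n + 1) * (π * m / (2 * n + 1)) = m * π by field_simp, sin_int_mul_pi] at htel
  have hprod : sin (π * m / (2 * n + 1))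
      * (2 * ∑ k ∈ Icc 1 n, cos (k * (2 * π * m / (2 * n + 1))) + 1) = 0 := by
    linear_combination htel
  linarith [(mul_eq_zero.mp hprod).resolve_left hsin]

lemma two_div_mul_sum_cos_sub_gridNode {n N : ℕ} (hN : N = 2 * n + 1) {i j : ℕ}
    (hi : i ∈ Icc 1 N) (hj : j ∈ Icc 1 N) :
    2 / N * ∑ k ∈ Icc 1 n, cos (k * gridNode N i - k * gridNode N j)
      = (if i = j then 1 else 0) - 1 / N := by
  have hNr : (N : ℝ) = 2 * n + 1 := by rw [hN]; push_cast; ring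
  by_cases hij : i = j
  · subst hij
    simp only [sub_self, cos_zero, sum_const, Nat.card_Icc, if_true, hNr]
    field_simp
    push_cast
    ring
  · have hm : ¬ (2 * n + 1 : ℤ) ∣ (i : ℤ) - j := fun hdvd => by
      simp only [mem_Icc] at hi hj
      have := Int.eq_zero_of_dvd_of_natAbs_lt_natAbs hdvd (by omega)
      omega
    simp_rw [← mul_sub, gridNode_sub_gridNode, hNr, sum_cos_two_pi_int_mul_div_of_not_dvd n hm,
      if_neg hij]
    field_simp
    ring

noncomputable def discreteFourierCos (N : ℕ) (h : ℕ → ℝ) (k : ℕ) : ℝ :=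
  2 / (N : ℝ) * ∑ j ∈ Icc 1 N, h j * cos ((k : ℝ) * gridNode N j)

noncomputable def discreteFourierSin (N : ℕ) (h : ℕ → ℝ) (k : ℕ) : ℝ :=
  2 / (N : ℝ) * ∑ j ∈ Icc 1 N, h j * sin ((k : ℝ) * gridNode N j)

lemma discreteFourierCos_zero_div_two (N : ℕ) (h : ℕ → ℝ) :
    discreteFourierCos N h 0 / 2 = (∑ j ∈ Icc 1 N, h j) / N := by
  simp only [discreteFourierCos, Nat.cast_zero, zero_mul, cos_zero, mul_one]
  ring

theorem sum_discreteFourier_mul_gridNode {n N : ℕ} (hN : N = 2 * n + 1) (h : ℕ → ℝ) {i : ℕ}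
    (hi : i ∈ Icc 1 N) :
    ∑ k ∈ Icc 1 n, (discreteFourierCos N h k * cos (k * gridNode N i)
        + discreteFourierSin N h k * sin (k * gridNode N i))
      = h i - (∑ j ∈ Icc 1 N, h j) / N := by
  calc _ = ∑ k ∈ Icc 1 n, ∑ j ∈ Icc 1 N,
          h j * (2 / N * cos (k * gridNode N i - k * gridNode N j)) := by
        refine sum_congr rfl fun k _ => ?_
        simp only [discreteFourierCos, discreteFourierSin, mul_sum, sum_mul, ← sum_add_distrib]
        refine sum_congr rfl fun j _ => ?_
        rw [cos_sub]
        ring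
    _ = ∑ j ∈ Icc 1 N,
          h j * (2 / N * ∑ k ∈ Icc 1 n, cos (k * gridNode N i - k * gridNode N j)) := by
        rw [sum_comm]
        simp only [mul_sum]
    _ = ∑ j ∈ Icc 1 N, h j * ((if i = j then 1 else 0) - 1 / N) :=
        sum_congr rfl fun j hj => by rw [two_div_mul_sum_cos_sub_gridNode hN hi hj]
    _ = h i - (∑ j ∈ Icc 1 N, h j) / N := by
        simp only [mul_sub, mul_ite, mul_one, mul_zero, sum_sub_distrib, sum_ite_eq, if_pos hi,
          sum_div, mul_one_div]

noncomputable def hermiteTerm (N : ℕ) (a₀ b₀ a₁ b₁ : ℕ → ℝ) (k : ℕ) (x : ℝ) : ℝ :=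
  (((N : ℝ) - k) * a₀ k - b₁ k) * cos ((k : ℝ) * x) -
    ((k : ℝ) * a₀ k + b₁ k) * cos (((N : ℝ) - k) * x) +
    (((N : ℝ) - k) * b₀ k + a₁ k) * sin ((k : ℝ) * x) +
    ((k : ℝ) * b₀ k - a₁ k) * sin (((N : ℝ) - k) * x)

noncomputable def hermiteTrigPoly (N n : ℕ) (a₀ b₀ a₁ b₁ : ℕ → ℝ) (x : ℝ) : ℝ :=
  a₀ 0 / 2 + (1 / (N : ℝ)) * ∑ k ∈ Icc 1 n, hermiteTerm N a₀ b₀ a₁ b₁ k x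

section HermiteTrigPoly

variable {N : ℕ} (hN : N ≠ 0) (n : ℕ) (a₀ b₀ a₁ b₁ : ℕ → ℝ) (k i : ℕ)
include hN

lemma hermiteTerm_gridNode :
    hermiteTerm N a₀ b₀ a₁ b₁ k (gridNode N i)
      = N * (a₀ k * cos (k * gridNode N i) + b₀ k * sin (k * gridNode N i)) := by
  rw [hermiteTerm, cos_natCast_sub_mul_gridNode hN, sin_natCast_sub_mul_gridNode hN]
  ring

lemma hasDerivAt_hermiteTerm_gridNode :
    HasDerivAt (hermiteTerm N a₀ b₀ a₁ b₁ k)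
      (N * (a₁ k * cos (k * gridNode N i) + b₁ k * sin (k * gridNode N i))) (gridNode N i) := by
  have hcos (c ω : ℝ) : HasDerivAt (fun x => c * cos (ω * x))
      (-(c * ω * sin (ω * gridNode N i))) (gridNode N i) :=
    (((hasDerivAt_const_mul ω).cos).const_mul c).congr_deriv (by ring)
  have hsin (c ω : ℝ) : HasDerivAt (fun x => c * sin (ω * x))
      (c * ω * cos (ω * gridNode N i)) (gridNode N i) :=
    (((hasDerivAt_const_mul ω).sin).const_mul c).congr_deriv (by ring)
  refine ((((hcos _ _).sub (hcos _ _)).add (hsin _ _)).add (hsin _ _)).congr_deriv ?_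
  rw [cos_natCast_sub_mul_gridNode hN, sin_natCast_sub_mul_gridNode hN]
  ring

lemma hermiteTrigPoly_gridNode :
    hermiteTrigPoly N n a₀ b₀ a₁ b₁ (gridNode N i)
      = a₀ 0 / 2
        + ∑ k ∈ Icc 1 n, (a₀ k * cos (k * gridNode N i) + b₀ k * sin (k * gridNode N i)) := by
  simp only [hermiteTrigPoly, hermiteTerm_gridNode hN, ← mul_sum]
  rw [one_div, inv_mul_cancel_left₀ (Nat.cast_ne_zero.mpr hN)]

lemma hasDerivAt_hermiteTrigPoly_gridNode :
    HasDerivAt (hermiteTrigPoly N n a₀ b₀ a₁ b₁)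
      (∑ k ∈ Icc 1 n, (a₁ k * cos (k * gridNode N i) + b₁ k * sin (k * gridNode N i)))
      (gridNode N i) := by
  have hsum := HasDerivAt.fun_sum fun k (_ : k ∈ Icc 1 n) =>
    hasDerivAt_hermiteTerm_gridNode hN a₀ b₀ a₁ b₁ k i
  refine ((hasDerivAt_const _ (a₀ 0 / 2)).add (hsum.const_mul (1 / (N : ℝ)))).congr_deriv ?_
  rw [← mul_sum, zero_add, one_div, inv_mul_cancel_left₀ (Nat.cast_ne_zero.mpr hN)]

end HermiteTrigPoly

theorem hermite_interpolation_p1_grid1_general (n : ℕ) (N : ℕ) (hN : N = 2 * n + 1)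
    (t : ℕ → ℝ) (ht : ∀ j, t j = π * (2 * (j : ℝ) - 1) / N)
    (f g : ℕ → ℝ) (hg : ∑ j ∈ Icc 1 N, g j = 0)
    (A₀ B₀ A₁ B₁ : ℕ → ℝ)
    (hA₀ : ∀ k, A₀ k = 2 / (N : ℝ) * ∑ j ∈ Icc 1 N, f j * cos ((k : ℝ) * t j))
    (hB₀ : ∀ k, B₀ k = 2 / (N : ℝ) * ∑ j ∈ Icc 1 N, f j * sin ((k : ℝ) * t j))
    (hA₁ : ∀ k, A₁ k = 2 / (N : ℝ) * ∑ j ∈ Icc 1 N, g j * cos ((k : ℝ) * t j))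
    (hB₁ : ∀ k, B₁ k = 2 / (N : ℝ) * ∑ j ∈ Icc 1 N, g j * sin ((k : ℝ) * t j))
    (T : ℝ → ℝ)
    (hT : ∀ x : ℝ, T x = A₀ 0 / 2 + (1 / (N : ℝ)) * ∑ k ∈ Icc 1 n,
      ((((N : ℝ) - k) * A₀ k - B₁ k) * cos ((k : ℝ) * x) -
       ((k : ℝ) * A₀ k + B₁ k) * cos (((N : ℝ) - k) * x) +
       (((N : ℝ) - k) * B₀ k + A₁ k) * sin ((k : ℝ) * x) +
       ((k : ℝ) * B₀ k - A₁ k) * sin (((N : ℝ) - k) * x))) :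
    ∀ j ∈ Icc 1 N, T (t j) = f j ∧ deriv T (t j) = g j := by
  intro i hi
  have hN0 : N ≠ 0 := by omega
  obtain rfl : T = hermiteTrigPoly N n A₀ B₀ A₁ B₁ := funext hT
  obtain rfl : t = gridNode N := funext ht
  obtain rfl : A₀ = discreteFourierCos N f := funext hA₀
  obtain rfl : B₀ = discreteFourierSin N f := funext hB₀
  obtain rfl : A₁ = discreteFourierCos N g := funext hA₁
  obtain rfl : B₁ = discreteFourierSin N g := funext hB₁
  constructor
  · rw [hermiteTrigPoly_gridNode hN0, discreteFourierCos_zero_div_two,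
      sum_discreteFourier_mul_gridNode hN f hi]
    ring
  · rw [(hasDerivAt_hermiteTrigPoly_gridNode hN0 ..).deriv,
      sum_discreteFourier_mul_gridNode hN g hi, hg, zero_div, sub_zero]

/-- The Hermite trigonometric polynomial of formula (6), built from the discrete
Fourier coefficients of the data `f_j` (function values) and `g_j` (centered
derivative values), solves the Hermite interpolation problem of order `p = 1`
on the grid `Δ_N^{(1)}` with nodes `t_j = π(2j-1)/N`, `N = 2n+1`. -/
theorem hermite_interpolation_p1_grid1 (n : ℕ) (hn : 1 ≤ n) (N : ℕ) (hN : N = 2 * n + 1)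
    (t : ℕ → ℝ) (ht : ∀ j, t j = π * (2 * (j : ℝ) - 1) / N)
    (f g : ℕ → ℝ) (hg : ∑ j ∈ Icc 1 N, g j = 0)
    (A₀ B₀ A₁ B₁ : ℕ → ℝ)
    (hA₀ : ∀ k, A₀ k = 2 / (N : ℝ) * ∑ j ∈ Icc 1 N, f j * cos ((k : ℝ) * t j))
    (hB₀ : ∀ k, B₀ k = 2 / (N : ℝ) * ∑ j ∈ Icc 1 N, f j * sin ((k : ℝ) * t j))
    (hA₁ : ∀ k, A₁ k = 2 / (N : ℝ) * ∑ j ∈ Icc 1 N, g j * cos ((k : ℝ) * t j))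
    (hB₁ : ∀ k, B₁ k = 2 / (N : ℝ) * ∑ j ∈ Icc 1 N, g j * sin ((k : ℝ) * t j))
    (T : ℝ → ℝ)
    (hT : ∀ x : ℝ, T x = A₀ 0 / 2 + (1 / (N : ℝ)) * ∑ k ∈ Icc 1 n,
      ((((N : ℝ) - k) * A₀ k - B₁ k) * cos ((k : ℝ) * x) -
       ((k : ℝ) * A₀ k + B₁ k) * cos (((N : ℝ) - k) * x) +
       (((N : ℝ) - k) * B₀ k + A₁ k) * sin ((k : ℝ) * x) +
       ((k : ℝ) * B₀ k - A₁ k) * sin (((N : ℝ) - k) * x))) :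
    ∀ j ∈ Icc 1 N, T (t j) = f j ∧ deriv T (t j) = g j :=
  hermite_interpolation_p1_grid1_general n N hN t ht f g hg A₀ B₀ A₁ B₁ hA₀ hB₀ hA₁ hB₁ T hT
end
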